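/- arXiv:2008.09871 — 3 statements merged into one kernel-verified Lean document; each statement's English description precedes it below -/
import Mathlib

section
/- Let q > 3 be a prime, χ a nontrivial Dirichlet character modulo q, and m, r_1, r_2, α, γ integers with gcd(αγ, q) = 1 and gcd(r_1·r_2, q) = 1. If q divides m, then 𝔠 = χ(α·γ̄)·R_q(r_2 − r_1·α·γ̄) − χ(r_2·r̄_1), where γ̄ and r̄_1 denote multiplicative inverses modulo q and R_q(a) = Σ_{z ∈ 𝔽_q^×} e(az/q) is the Ramanujan sum (so R_q(a) = q−1 if q | a and R_q(a) = −1 otherwise). -/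
open Complex

/-- The complete character sum
`𝔠 = Σ_{z ∈ 𝔽_q^×, m + γ z̄ ≠ 0} χ̄(r₁ + z) χ(r₂ + α (m + γ z̄)⁻¹)`,
all arithmetic in `𝔽_q = ZMod q` (the sum over `𝔽_q^×` is realized as a sum over
residues `z ∈ {0,…,q−1}` with `z ≠ 0` in `ZMod q`). -/
noncomputable def frakC (q : ℕ) (χ : DirichletCharacter ℂ q) (m r1 r2 α γ : ℤ) : ℂ :=
  ∑ z ∈ (Finset.range q).filter
      (fun z : ℕ => (z : ZMod q) ≠ 0 ∧ (m : ZMod q) + (γ : ZMod q) * (z : ZMod q)⁻¹ ≠ 0),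
    (starRingEnd ℂ) (χ ((r1 : ZMod q) + (z : ZMod q))) *
      χ ((r2 : ZMod q) + (α : ZMod q) * ((m : ZMod q) + (γ : ZMod q) * (z : ZMod q)⁻¹)⁻¹)

/-- The Ramanujan sum `R_q(a)` for `q` prime: `q−1` if `a = 0` in `𝔽_q`, and `−1` otherwise. -/
noncomputable def ramanujanRq (q : ℕ) (a : ZMod q) : ℂ :=
  if a = 0 then (q : ℂ) - 1 else -1

/-!
Since `q ∣ m`, the summand is `χ((r₁ + z)⁻¹ (r₂ + β z))` with `β = α γ̄`, using
`χ̄(x) = χ(x⁻¹)`. Adding the missing term `z = 0`, which is `χ(r₂ r̄₁)`, and substituting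
`w = r₁ + z` turns the sum into `Σ_w χ(β + d w̄) - χ(β)` with `d = r₂ - β r₁` (reading `0̄ = 0`).
As `w ↦ β + d w̄` permutes `𝔽_q` when `d ≠ 0`, the remaining sum is `Σ_t χ(t) = 0` for `d ≠ 0`
and `q χ(β)` for `d = 0`.
-/

open Finset

namespace MulChar

variable {F R : Type*} [Field F] [Fintype F] [DecidableEq F] [CommRing R] [IsDomain R]
  {χ : MulChar F R}

lemma sum_apply_add_mul (hχ : χ ≠ 1) (b d : F) :
    ∑ w, χ (b + d * w) = if d = 0 then Fintype.card F • χ b else 0 := by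
  split_ifs with hd
  · simp [hd]
  · calc ∑ w, χ (b + d * w) = ∑ t, χ t :=
          Equiv.sum_comp ((Equiv.mulLeft₀ d hd).trans (Equiv.addLeft b)) χ
      _ = 0 := sum_eq_zero_of_ne_one hχ

lemma sum_apply_inv_mul_mul_add (hχ : χ ≠ 1) (β d : F) :
    ∑ w, χ (w⁻¹ * (β * w + d)) = χ β * ((if d = 0 then (Fintype.card F : R) else 0) - 1) := by
  have hterm : ∀ w : F, χ (w⁻¹ * (β * w + d)) = χ (β + d * w⁻¹) - if w = 0 then χ β else 0 := by
    intro w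
    by_cases hw : w = 0
    · simp [hw]
    · rw [if_neg hw, sub_zero]
      congr 1
      field_simp
  have hinv : ∑ w, χ (β + d * w⁻¹) = ∑ w, χ (β + d * w) :=
    Equiv.sum_comp (Equiv.inv F) (fun w => χ (β + d * w))
  simp only [hterm, sum_sub_distrib, sum_ite_eq', mem_univ, if_true, hinv, sum_apply_add_mul hχ]
  split_ifs
  · rw [nsmul_eq_mul]
    ring
  · ring

lemma sum_apply_inv_add_mul_add_mul (hχ : χ ≠ 1) (r₁ r₂ β : F) :
    ∑ z, χ ((r₁ + z)⁻¹ * (r₂ + β * z)) =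
      χ β * ((if r₂ - β * r₁ = 0 then (Fintype.card F : R) else 0) - 1) := by
  rw [← sum_apply_inv_mul_mul_add hχ β (r₂ - β * r₁),
    ← Equiv.sum_comp (Equiv.addLeft r₁) (fun w => χ (w⁻¹ * (β * w + (r₂ - β * r₁))))]
  refine sum_congr rfl fun z _ => ?_
  simp only [Equiv.coe_addLeft]
  ring_nf

end MulChar

lemma sum_range_natCast_eq_sum_zmod {M : Type*} [AddCommMonoid M] (q : ℕ) [NeZero q]
    (g : ZMod q → M) : ∑ z ∈ range q, g z = ∑ z : ZMod q, g z :=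
  sum_nbij' (fun i => (i : ZMod q)) ZMod.val (fun _ _ => mem_univ _)
    (fun a _ => mem_range.2 a.val_lt) (fun _ ha => ZMod.val_natCast_of_lt (mem_range.1 ha))
    (fun a _ => ZMod.natCast_zmod_val a) (fun _ _ => rfl)

lemma frakC_eq_sum_of_dvd (q : ℕ) [Fact q.Prime] (χ : DirichletCharacter ℂ q)
    {m : ℤ} (r1 r2 α : ℤ) {γ : ℤ} (hγ : (γ : ZMod q) ≠ 0) (hm : (q : ℤ) ∣ m) :
    frakC q χ m r1 r2 α γ =
      ∑ z ∈ univ.erase 0,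
        χ (((r1 : ZMod q) + z)⁻¹ * ((r2 : ZMod q) + (α : ZMod q) * (γ : ZMod q)⁻¹ * z)) := by
  have hm0 : (m : ZMod q) = 0 := (ZMod.intCast_zmod_eq_zero_iff_dvd m q).2 hm
  rw [frakC, sum_filter, sum_range_natCast_eq_sum_zmod q (fun z : ZMod q =>
      if z ≠ 0 ∧ (m : ZMod q) + γ * z⁻¹ ≠ 0 then
        (starRingEnd ℂ) (χ (r1 + z)) * χ (r2 + α * ((m : ZMod q) + γ * z⁻¹)⁻¹)
      else 0), ← sum_filter]
  refine sum_congr (by ext z; simp [hm0, hγ]) fun z _ => ?_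
  rw [starRingEnd_apply, MulChar.star_apply', MulChar.inv_apply', ← map_mul, hm0, zero_add,
    mul_inv, inv_inv]
  ring_nf

lemma ramanujanRq_eq (q : ℕ) (a : ZMod q) :
    ramanujanRq q a = (if a = 0 then (q : ℂ) else 0) - 1 := by
  unfold ramanujanRq
  split_ifs <;> ring

theorem stmt_8_general (q : ℕ) (hq : q.Prime)
    (χ : DirichletCharacter ℂ q) (hχ : χ ≠ 1)
    (m r1 r2 α γ : ℤ) (hαγ : Int.gcd (α * γ) q = 1)
    (hm : (q : ℤ) ∣ m) :
    frakC q χ m r1 r2 α γ =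
      χ ((α : ZMod q) * (γ : ZMod q)⁻¹) *
          ramanujanRq q ((r2 : ZMod q) - (r1 : ZMod q) * (α : ZMod q) * (γ : ZMod q)⁻¹) -
        χ ((r2 : ZMod q) * (r1 : ZMod q)⁻¹) := by
  have : Fact q.Prime := ⟨hq⟩
  have hγ : (γ : ZMod q) ≠ 0 :=
    right_ne_zero_of_mul (a := (α : ZMod q)) (by exact_mod_cast ZMod.ne_zero_of_gcd_eq_one hq hαγ)
  rw [frakC_eq_sum_of_dvd q χ r1 r2 α hγ hm, sum_erase_eq_sub (mem_univ 0),
    MulChar.sum_apply_inv_add_mul_add_mul hχ, ZMod.card, ramanujanRq_eq]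
  ring_nf

theorem stmt_8 (q : ℕ) (hq : q.Prime) (hq3 : 3 < q)
    (χ : DirichletCharacter ℂ q) (hχ : χ ≠ 1)
    (m r1 r2 α γ : ℤ) (hαγ : Int.gcd (α * γ) q = 1) (hr : Int.gcd (r1 * r2) q = 1)
    (hm : (q : ℤ) ∣ m) :
    frakC q χ m r1 r2 α γ =
      χ ((α : ZMod q) * (γ : ZMod q)⁻¹) *
          ramanujanRq q ((r2 : ZMod q) - (r1 : ZMod q) * (α : ZMod q) * (γ : ZMod q)⁻¹) -
        χ ((r2 : ZMod q) * (r1 : ZMod q)⁻¹) :=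
  stmt_8_general q hq χ hχ m r1 r2 α γ hαγ hm
end

section
/- Let a < b be reals, let w : ℝ → ℂ be a smooth function supported in [a,b], and let ϱ : ℝ → ℝ be smooth on [a,b]. Let Q, U, Y, Z, R > 0 and suppose there are constants c_i (i ≥ 2) and c_j' (j ≥ 0) with |ϱ^{(i)}(x)| ≤ c_i·Y/Q^i for all i ≥ 2 and all x ∈ [a,b], |w^{(j)}(x)| ≤ c_j'·Z/U^j for all j ≥ 0 and all x ∈ [a,b], and |ϱ'(x)| ≥ R for all x ∈ [a,b]. Then for every A ≥ 0 there is a constant C, depending only on A and on finitely many of the c_i and c_j', such that | ∫_ℝ w(y)·e^{iϱ(y)} dy | ≤ C·(b−a)·Z·( Y/(R²Q²) + 1/(RQ) + 1/(RU) )^A. -/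
open MeasureTheory Complex Set Filter
open scoped ContDiff

namespace Stmt11Aux

noncomputable def Wseq (v w : ℝ → ℂ) : ℕ → ℝ → ℂ
  | 0 => w
  | (k+1) => deriv (fun y => Wseq v w k y * v y)

lemma itd_ofReal {f : ℝ → ℝ} (hf : ContDiff ℝ ∞ f) (n : ℕ) :
    iteratedDeriv n (fun y => (f y : ℂ)) = fun y => ((iteratedDeriv n f y : ℝ) : ℂ) := by
  induction n with
  | zero => simp
  | succ n ih =>
    rw [iteratedDeriv_succ, ih, iteratedDeriv_succ]
    funext x
    exact (((hf.differentiable_iteratedDeriv n (by exact_mod_cast (lt_top_iff_ne_top.2 (by simp)))).differentiableAt).hasDerivAt.ofReal_comp).deriv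

lemma contDiffOn_itd {s : Set ℝ} {f : ℝ → ℂ} (hs : IsOpen s) (hf : ContDiffOn ℝ ∞ f s) (m : ℕ) :
    ContDiffOn ℝ ∞ (iteratedDeriv m f) s := by
  induction m with
  | zero => simpa using hf
  | succ m ih =>
    rw [iteratedDeriv_succ]
    exact ih.deriv_of_isOpen hs (by exact_mod_cast le_refl _)

lemma hasDerivAt_itd {s : Set ℝ} {f : ℝ → ℂ} (hs : IsOpen s) (hf : ContDiffOn ℝ ∞ f s) (m : ℕ)
    {x : ℝ} (hx : x ∈ s) :
    HasDerivAt (iteratedDeriv m f) (iteratedDeriv (m+1) f x) x := by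
  have h := (contDiffOn_itd hs hf m).differentiableOn (by simp)
  have hd : DifferentiableAt ℝ (iteratedDeriv m f) x := (h x hx).differentiableAt (hs.mem_nhds hx)
  simpa [iteratedDeriv_succ] using hd.hasDerivAt

lemma norm_itd_mul_le {s : Set ℝ} {f g : ℝ → ℂ} (hs : IsOpen s) (hf : ContDiffOn ℝ ∞ f s)
    (hg : ContDiffOn ℝ ∞ g s) {x : ℝ} (hx : x ∈ s) (n : ℕ) :
    ‖iteratedDeriv n (fun y => f y * g y) x‖ ≤ ∑ i ∈ Finset.range (n+1),
      (n.choose i : ℝ) * ‖iteratedDeriv i f x‖ * ‖iteratedDeriv (n-i) g x‖ := by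
  have h := norm_iteratedFDerivWithin_mul_le (𝕜 := ℝ) hf hg hs.uniqueDiffOn hx
    (n := n) (by exact_mod_cast le_top)
  have key : ∀ (k : ℕ) (F : ℝ → ℂ), ‖iteratedFDerivWithin ℝ k F s x‖ = ‖iteratedDeriv k F x‖ := by
    intro k F
    rw [iteratedFDerivWithin_of_isOpen k hs hx, norm_iteratedFDeriv_eq_norm_iteratedDeriv]
  rw [key] at h
  refine h.trans (le_of_eq ?_)
  refine Finset.sum_congr rfl fun i _ => ?_
  rw [key, key]

lemma itd_two (f : ℝ → ℝ) : iteratedDeriv 2 f = deriv (deriv f) := by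
  rw [iteratedDeriv_eq_iterate]; rfl

lemma itd_add_two (f : ℝ → ℝ) (i : ℕ) :
    iteratedDeriv i (iteratedDeriv 2 f) = iteratedDeriv (i + 2) f := by
  rw [iteratedDeriv_eq_iterate, iteratedDeriv_eq_iterate, iteratedDeriv_eq_iterate,
    Function.iterate_add_apply]

lemma contDiff_itd2 {f : ℝ → ℝ} (hf : ContDiff ℝ ∞ f) : ContDiff ℝ ∞ (iteratedDeriv 2 f) := by
  rw [iteratedDeriv_eq_iterate]; exact hf.iterate_deriv 2

lemma claimA (cphase : ℕ → ℝ) : ∀ m : ℕ, ∃ e : ℝ, 0 ≤ e ∧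
    ∀ (a b : ℝ) (ϱ : ℝ → ℝ), ContDiff ℝ ∞ ϱ →
    ∀ Q Y R T : ℝ, 0 < Q → 0 < Y → 0 < R → 0 < T →
    (∀ i : ℕ, 2 ≤ i → ∀ x ∈ Icc a b, |iteratedDeriv i ϱ x| ≤ cphase i * Y / Q ^ i) →
    (∀ x ∈ Icc a b, R ≤ |deriv ϱ x|) →
    1/Q ≤ T → Y/(Q^2*R) ≤ T →
    ∀ x ∈ Icc a b, ‖iteratedDeriv m (fun y => (((deriv ϱ y : ℝ) : ℂ))⁻¹) x‖ ≤ e / R * T^m := by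
  intro m
  induction m using Nat.strong_induction_on with
  | _ m IH =>
  match m with
  | 0 =>
    refine ⟨1, zero_le_one, ?_⟩
    intro a b ϱ hϱ Q Y R T hQ hY hR hT hphase hlow hQT hYT x hx
    have h1 : ‖iteratedDeriv 0 (fun y => (((deriv ϱ y : ℝ) : ℂ))⁻¹) x‖ = |deriv ϱ x|⁻¹ := by
      rw [iteratedDeriv_zero]
      rw [norm_inv, Complex.norm_real, Real.norm_eq_abs]
    rw [h1, pow_zero, mul_one]
    rw [one_div]
    exact inv_anti₀ hR (hlow x hx)
  | (n+1) =>
    classical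
    set E : ℕ → ℝ := fun k => if h : k < n+1 then (IH k h).choose else 0 with hEdef
    have hE0 : ∀ k, 0 ≤ E k := by
      intro k; dsimp only [E]; split
      · exact (IH k ‹_›).choose_spec.1
      · exact le_refl 0
    have hEspec : ∀ k, k < n+1 →
      ∀ (a b : ℝ) (ϱ : ℝ → ℝ), ContDiff ℝ ∞ ϱ →
      ∀ Q Y R T : ℝ, 0 < Q → 0 < Y → 0 < R → 0 < T →
      (∀ i : ℕ, 2 ≤ i → ∀ x ∈ Icc a b, |iteratedDeriv i ϱ x| ≤ cphase i * Y / Q ^ i) →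
      (∀ x ∈ Icc a b, R ≤ |deriv ϱ x|) →
      1/Q ≤ T → Y/(Q^2*R) ≤ T →
      ∀ x ∈ Icc a b, ‖iteratedDeriv k (fun y => (((deriv ϱ y : ℝ) : ℂ))⁻¹) x‖ ≤ E k / R * T^k := by
      intro k hk
      have := (IH k hk).choose_spec.2
      simpa only [hEdef, dif_pos hk] using this
    set F : ℕ → ℝ := fun k => ∑ j ∈ Finset.range (k+1), ((k.choose j : ℝ)) * E j * E (k-j)
      with hFdef
    have hF0 : ∀ k, 0 ≤ F k := by
      intro k
      refine Finset.sum_nonneg fun j _ => ?_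
      have := hE0 j; have := hE0 (k-j); positivity
    refine ⟨∑ i ∈ Finset.range (n+1), ((n.choose i : ℝ)) * max 0 (cphase (i+2)) * F (n-i),
      Finset.sum_nonneg fun i _ => by have := hF0 (n-i); positivity, ?_⟩
    intro a b ϱ hϱ Q Y R T hQ hY hR hT hphase hlow hQT hYT x hx
    set g : ℝ → ℂ := fun y => ((deriv ϱ y : ℝ) : ℂ) with hgdef
    set v : ℝ → ℂ := fun y => (g y)⁻¹ with hvdef
    set s : Set ℝ := {y : ℝ | deriv ϱ y ≠ 0} with hsdef
    have hd1 : ContDiff ℝ ∞ (deriv ϱ) := (contDiff_infty_iff_deriv.mp hϱ).2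
    have hso : IsOpen s := isOpen_compl_singleton.preimage hd1.continuous
    have hsub : Icc a b ⊆ s := by
      intro y hy h0
      have := hlow y hy
      rw [h0] at this; simp at this; linarith
    have hxs : x ∈ s := hsub hx
    have hg : ContDiff ℝ ∞ g := by
      simpa [Function.comp_def] using Complex.ofRealCLM.contDiff.comp hd1
    have hv : ContDiffOn ℝ ∞ v s := by
      rw [hvdef]
      exact ContDiffOn.inv hg.contDiffOn (fun y hy => Complex.ofReal_ne_zero.mpr hy)
    -- the real second-derivative function
    set r : ℝ → ℝ := fun y => iteratedDeriv 2 ϱ y with hrdef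
    have hr : ContDiff ℝ ∞ r := contDiff_itd2 hϱ
    set q : ℝ → ℂ := fun y => -((r y : ℝ) : ℂ) with hqdef
    have hq : ContDiff ℝ ∞ q := by
      have := (Complex.ofRealCLM.contDiff.comp hr).neg
      simpa using this
    -- step 1 : identity
    have hvd : ∀ y ∈ s, deriv v y = q y * (v y * v y) := by
      intro y hy
      have hy' : deriv ϱ y ≠ 0 := hy
      have hdy : DifferentiableAt ℝ (deriv ϱ) y :=
        (hd1.differentiable (by simp)).differentiableAt
      have h1 : HasDerivAt (deriv ϱ) (r y) y := by
        have h := hdy.hasDerivAt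
        have : deriv (deriv ϱ) y = r y := by rw [hrdef]; simp [itd_two]
        rwa [this] at h
      have h2 : HasDerivAt g ((r y : ℝ) : ℂ) y := h1.ofReal_comp
      have hne : g y ≠ 0 := Complex.ofReal_ne_zero.mpr hy'
      have h3 : HasDerivAt (Inv.inv ∘ g) (-(g y ^ 2)⁻¹ * ((r y : ℝ) : ℂ)) y :=
        (hasDerivAt_inv hne).comp y h2
      have h4 : deriv v y = -(g y ^ 2)⁻¹ * ((r y : ℝ) : ℂ) := by
        have hveq : v = Inv.inv ∘ g := rfl
        rw [hveq]; exact h3.deriv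
      rw [h4, hqdef, hvdef]
      rw [pow_two, mul_inv]
      ring
    have e1 : iteratedDeriv (n+1) v x = iteratedDeriv n (fun y => q y * (v y * v y)) x := by
      rw [iteratedDeriv_succ']
      exact Filter.EventuallyEq.iteratedDeriv_eq n
        (Filter.eventuallyEq_of_mem (hso.mem_nhds hxs) hvd)
    -- bounds on q
    have hqb : ∀ i : ℕ, ∀ y ∈ Icc a b, ‖iteratedDeriv i q y‖ ≤ max 0 (cphase (i+2)) * (R * T^(i+1)) := by
      intro i y hy
      have h1 : iteratedDeriv i q y = -(((iteratedDeriv i r y : ℝ)) : ℂ) := by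
        calc iteratedDeriv i q y = -iteratedDeriv i (fun t => ((r t : ℝ) : ℂ)) y :=
              iteratedDeriv_neg i (fun t => ((r t : ℝ) : ℂ)) y
          _ = -(((iteratedDeriv i r y : ℝ)) : ℂ) := by rw [itd_ofReal hr i]
      rw [h1, norm_neg, Complex.norm_real, Real.norm_eq_abs]
      have h2 : iteratedDeriv i r y = iteratedDeriv (i+2) ϱ y := by
        rw [hrdef]; rw [show (fun y => iteratedDeriv 2 ϱ y) = iteratedDeriv 2 ϱ from rfl,
          itd_add_two]
      rw [h2]
      have h3 := hphase (i+2) (by omega) y hy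
      refine h3.trans ?_
      have key : Y / Q ^ (i+2) = (Y/(Q^2*R)) * R * (1/Q)^i := by
        have hR1 : R⁻¹ * R = 1 := inv_mul_cancel₀ hR.ne'
        linear_combination (-(Y * (Q^2)⁻¹ * (Q^i)⁻¹)) * hR1
      have h4 : cphase (i+2) * Y / Q ^ (i+2) ≤ max 0 (cphase (i+2)) * (Y / Q ^ (i+2)) := by
        rw [mul_div_assoc]
        have : (0:ℝ) ≤ Y / Q^(i+2) := by positivity
        exact mul_le_mul_of_nonneg_right (le_max_right _ _) this
      refine h4.trans ?_
      refine mul_le_mul_of_nonneg_left ?_ (le_max_left 0 _)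
      rw [key]
      have h5 : (1/Q)^i ≤ T^i := pow_le_pow_left₀ (by positivity) hQT i
      calc Y/(Q^2*R) * R * (1/Q)^i ≤ T * R * T^i := by
            refine mul_le_mul (mul_le_mul_of_nonneg_right hYT hR.le) h5 (by positivity) ?_
            positivity
        _ = R * T^(i+1) := by ring
    -- bounds on v*v
    have hvvb : ∀ k : ℕ, k < n+1 → ∀ y ∈ Icc a b,
        ‖iteratedDeriv k (fun t => v t * v t) y‖ ≤ F k / R^2 * T^k := by
      intro k hk y hy
      have hys : y ∈ s := hsub hy
      have h := norm_itd_mul_le hso hv hv hys k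
      refine h.trans ?_
      have hterm : ∀ j ∈ Finset.range (k+1),
          (k.choose j : ℝ) * ‖iteratedDeriv j v y‖ * ‖iteratedDeriv (k-j) v y‖ ≤
          ((k.choose j : ℝ) * E j * E (k-j)) / R^2 * T^k := by
        intro j hj
        have hj' : j < k+1 := Finset.mem_range.mp hj
        have b1 := hEspec j (by omega) a b ϱ hϱ Q Y R T hQ hY hR hT hphase hlow hQT hYT y hy
        have b2 := hEspec (k-j) (by omega) a b ϱ hϱ Q Y R T hQ hY hR hT hphase hlow hQT hYT y hy
        have hch : (0:ℝ) ≤ (k.choose j : ℝ) := by positivity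
        calc (k.choose j : ℝ) * ‖iteratedDeriv j v y‖ * ‖iteratedDeriv (k-j) v y‖
            ≤ (k.choose j : ℝ) * (E j / R * T^j) * (E (k-j) / R * T^(k-j)) := by
              refine mul_le_mul (mul_le_mul_of_nonneg_left b1 hch) b2 (norm_nonneg _) ?_
              have := hE0 j; positivity
          _ = ((k.choose j : ℝ) * E j * E (k-j)) / R^2 * (T^j * T^(k-j)) := by ring
          _ = ((k.choose j : ℝ) * E j * E (k-j)) / R^2 * T^k := by
              rw [← pow_add]
              congr 2
              omega
      calc (∑ j ∈ Finset.range (k+1),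
            (k.choose j : ℝ) * ‖iteratedDeriv j v y‖ * ‖iteratedDeriv (k-j) v y‖)
          ≤ ∑ j ∈ Finset.range (k+1), ((k.choose j : ℝ) * E j * E (k-j)) / R^2 * T^k :=
            Finset.sum_le_sum hterm
        _ = F k / R^2 * T^k := by rw [← Finset.sum_mul, ← Finset.sum_div]
    -- combine
    rw [e1]
    have hvv : ContDiffOn ℝ ∞ (fun t => v t * v t) s := hv.mul hv
    have h := norm_itd_mul_le hso hq.contDiffOn hvv hxs n
    refine h.trans ?_
    have hterm : ∀ i ∈ Finset.range (n+1),
        (n.choose i : ℝ) * ‖iteratedDeriv i q x‖ * ‖iteratedDeriv (n-i) (fun t => v t * v t) x‖ ≤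
        ((n.choose i : ℝ) * max 0 (cphase (i+2)) * F (n-i)) / R * T^(n+1) := by
      intro i hi
      have hi' : i < n+1 := Finset.mem_range.mp hi
      have b1 := hqb i x hx
      have b2 := hvvb (n-i) (by omega) x hx
      have hch : (0:ℝ) ≤ (n.choose i : ℝ) := by positivity
      calc (n.choose i : ℝ) * ‖iteratedDeriv i q x‖ * ‖iteratedDeriv (n-i) (fun t => v t * v t) x‖
          ≤ (n.choose i : ℝ) * (max 0 (cphase (i+2)) * (R * T^(i+1))) * (F (n-i) / R^2 * T^(n-i)) := by
            refine mul_le_mul (mul_le_mul_of_nonneg_left b1 hch) b2 (norm_nonneg _) ?_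
            positivity
        _ = ((n.choose i : ℝ) * max 0 (cphase (i+2)) * F (n-i)) / R * (T^(i+1) * T^(n-i)) := by
            field_simp
        _ = ((n.choose i : ℝ) * max 0 (cphase (i+2)) * F (n-i)) / R * T^(n+1) := by
            rw [← pow_add]
            congr 2
            omega
    calc (∑ i ∈ Finset.range (n+1),
          (n.choose i : ℝ) * ‖iteratedDeriv i q x‖ * ‖iteratedDeriv (n-i) (fun t => v t * v t) x‖)
        ≤ ∑ i ∈ Finset.range (n+1),
            ((n.choose i : ℝ) * max 0 (cphase (i+2)) * F (n-i)) / R * T^(n+1) :=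
          Finset.sum_le_sum hterm
      _ = (∑ i ∈ Finset.range (n+1), (n.choose i : ℝ) * max 0 (cphase (i+2)) * F (n-i)) / R * T^(n+1) := by
          rw [← Finset.sum_mul, ← Finset.sum_div]

lemma Wseq_contDiffOn {s : Set ℝ} (hs : IsOpen s) {w v : ℝ → ℂ} (hw : ContDiff ℝ ∞ w)
    (hv : ContDiffOn ℝ ∞ v s) : ∀ k, ContDiffOn ℝ ∞ (Wseq v w k) s := by
  intro k
  induction k with
  | zero => exact hw.contDiffOn
  | succ k ih =>
    show ContDiffOn ℝ ∞ (deriv (fun y => Wseq v w k y * v y)) s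
    exact (ih.mul hv).deriv_of_isOpen hs (by exact_mod_cast le_refl _)

lemma claimB (cphase cweight : ℕ → ℝ) : ∀ k : ℕ, ∃ d : ℕ → ℝ, (∀ j, 0 ≤ d j) ∧
    ∀ (a b : ℝ) (w : ℝ → ℂ) (ϱ : ℝ → ℝ), ContDiff ℝ ∞ w → ContDiff ℝ ∞ ϱ →
    ∀ Q U Y Z R T : ℝ, 0 < Q → 0 < U → 0 < Y → 0 < Z → 0 < R → 0 < T →
    (∀ i : ℕ, 2 ≤ i → ∀ x ∈ Icc a b, |iteratedDeriv i ϱ x| ≤ cphase i * Y / Q ^ i) →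
    (∀ j : ℕ, ∀ x ∈ Icc a b, ‖iteratedDeriv j w x‖ ≤ cweight j * Z / U ^ j) →
    (∀ x ∈ Icc a b, R ≤ |deriv ϱ x|) →
    1/Q ≤ T → Y/(Q^2*R) ≤ T → 1/U ≤ T →
    ∀ j : ℕ, ∀ x ∈ Icc a b,
      ‖iteratedDeriv j (Wseq (fun y => (((deriv ϱ y : ℝ) : ℂ))⁻¹) w k) x‖
        ≤ d j * Z * T^(k+j) / R^k := by
  choose e he0 he using claimA cphase
  intro k
  induction k with
  | zero =>
    refine ⟨fun j => max 0 (cweight j), fun j => le_max_left _ _, ?_⟩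
    intro a b w ϱ hw hϱ Q U Y Z R T hQ hU hY hZ hR hT hphase hweight hlow hQT hYT hUT j x hx
    have h0 : ‖iteratedDeriv j w x‖ ≤ cweight j * Z / U ^ j := hweight j x hx
    refine h0.trans ?_
    simp only [pow_zero, div_one, Nat.zero_add]
    have h1 : cweight j * Z / U ^ j = (cweight j * Z) * (1/U)^j := by
      rw [one_div, inv_pow]; ring
    rw [h1]
    have h2 : (1/U)^j ≤ T^j := pow_le_pow_left₀ (by positivity) hUT j
    have h3 : cweight j * Z ≤ max 0 (cweight j) * Z :=
      mul_le_mul_of_nonneg_right (le_max_right _ _) hZ.le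
    calc (cweight j * Z) * (1/U)^j ≤ (max 0 (cweight j) * Z) * T^j := by
          refine mul_le_mul h3 h2 (by positivity) (by positivity)
      _ = max 0 (cweight j) * Z * T^j := rfl
  | succ k ih =>
    obtain ⟨d, hd0, hd⟩ := ih
    refine ⟨fun j => ∑ i ∈ Finset.range (j+2), (((j+1).choose i : ℝ)) * d i * e (j+1-i),
      fun j => Finset.sum_nonneg fun i _ => by
        have := hd0 i; have := he0 (j+1-i); positivity, ?_⟩
    intro a b w ϱ hw hϱ Q U Y Z R T hQ hU hY hZ hR hT hphase hweight hlow hQT hYT hUT j x hx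
    set v : ℝ → ℂ := fun y => (((deriv ϱ y : ℝ) : ℂ))⁻¹ with hvdef
    set s : Set ℝ := {y : ℝ | deriv ϱ y ≠ 0} with hsdef
    have hd1 : ContDiff ℝ ∞ (deriv ϱ) := (contDiff_infty_iff_deriv.mp hϱ).2
    have hso : IsOpen s := isOpen_compl_singleton.preimage hd1.continuous
    have hsub : Icc a b ⊆ s := by
      intro y hy h0
      have := hlow y hy
      rw [h0] at this; simp at this; linarith
    have hxs : x ∈ s := hsub hx
    have hg : ContDiff ℝ ∞ (fun y => ((deriv ϱ y : ℝ) : ℂ)) := by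
      simpa [Function.comp_def] using Complex.ofRealCLM.contDiff.comp hd1
    have hv : ContDiffOn ℝ ∞ v s := by
      rw [hvdef]
      exact ContDiffOn.inv hg.contDiffOn (fun y hy => Complex.ofReal_ne_zero.mpr hy)
    have heq : iteratedDeriv j (Wseq v w (k+1)) x
        = iteratedDeriv (j+1) (fun y => Wseq v w k y * v y) x := by
      show iteratedDeriv j (deriv (fun y => Wseq v w k y * v y)) x = _
      rw [← iteratedDeriv_succ']
    rw [heq]
    have hWk : ContDiffOn ℝ ∞ (Wseq v w k) s := Wseq_contDiffOn hso hw hv k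
    have h := norm_itd_mul_le hso hWk hv hxs (j+1)
    refine h.trans ?_
    have hterm : ∀ i ∈ Finset.range (j+2),
        ((j+1).choose i : ℝ) * ‖iteratedDeriv i (Wseq v w k) x‖ * ‖iteratedDeriv (j+1-i) v x‖ ≤
        (((j+1).choose i : ℝ) * d i * e (j+1-i)) * (Z * T^(k+1+j) / R^(k+1)) := by
      intro i hi
      have hi' : i < j+2 := Finset.mem_range.mp hi
      have b1 := hd a b w ϱ hw hϱ Q U Y Z R T hQ hU hY hZ hR hT hphase hweight hlow hQT hYT hUT
        i x hx
      rw [← hvdef] at b1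
      have b2 := he (j+1-i) a b ϱ hϱ Q Y R T hQ hY hR hT hphase hlow hQT hYT x hx
      rw [← hvdef] at b2
      have hch : (0:ℝ) ≤ (((j+1).choose i : ℕ) : ℝ) := by positivity
      calc ((j+1).choose i : ℝ) * ‖iteratedDeriv i (Wseq v w k) x‖ * ‖iteratedDeriv (j+1-i) v x‖
          ≤ ((j+1).choose i : ℝ) * (d i * Z * T^(k+i) / R^k) * (e (j+1-i) / R * T^(j+1-i)) := by
            refine mul_le_mul (mul_le_mul_of_nonneg_left b1 hch) b2 (norm_nonneg _) ?_
            have := hd0 i; positivity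
        _ = (((j+1).choose i : ℝ) * d i * e (j+1-i)) * (Z * (T^(k+i) * T^(j+1-i)) / R^(k+1)) := by
            rw [pow_succ]
            field_simp
        _ = (((j+1).choose i : ℝ) * d i * e (j+1-i)) * (Z * T^(k+1+j) / R^(k+1)) := by
            rw [← pow_add]
            have hexp : k+i+(j+1-i) = k+1+j := by omega
            rw [hexp]
    calc (∑ i ∈ Finset.range (j+2),
          ((j+1).choose i : ℝ) * ‖iteratedDeriv i (Wseq v w k) x‖ * ‖iteratedDeriv (j+1-i) v x‖)
        ≤ ∑ i ∈ Finset.range (j+2),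
            (((j+1).choose i : ℝ) * d i * e (j+1-i)) * (Z * T^(k+1+j) / R^(k+1)) :=
          Finset.sum_le_sum hterm
      _ = (∑ i ∈ Finset.range (j+2), ((j+1).choose i : ℝ) * d i * e (j+1-i))
            * (Z * T^(k+1+j) / R^(k+1)) := by rw [← Finset.sum_mul]
      _ = (∑ i ∈ Finset.range (j+2), ((j+1).choose i : ℝ) * d i * e (j+1-i))
            * Z * T^(k+1+j) / R^(k+1) := by ring

lemma eq_zero_of_left {f : ℝ → ℂ} {a : ℝ} (hc : ContinuousAt f a) (h0 : ∀ y < a, f y = 0) :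
    f a = 0 := by
  have h1 : Tendsto f (nhdsWithin a (Iio a)) (nhds (f a)) := (hc.continuousWithinAt).tendsto
  have h2 : Tendsto f (nhdsWithin a (Iio a)) (nhds (0 : ℂ)) := by
    refine Tendsto.congr' ?_ tendsto_const_nhds
    filter_upwards [self_mem_nhdsWithin] with y hy
    exact (h0 y hy).symm
  exact tendsto_nhds_unique h1 h2

lemma eq_zero_of_right {f : ℝ → ℂ} {b : ℝ} (hc : ContinuousAt f b) (h0 : ∀ y, b < y → f y = 0) :
    f b = 0 := by
  have h1 : Tendsto f (nhdsWithin b (Ioi b)) (nhds (f b)) := (hc.continuousWithinAt).tendsto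
  have h2 : Tendsto f (nhdsWithin b (Ioi b)) (nhds (0 : ℂ)) := by
    refine Tendsto.congr' ?_ tendsto_const_nhds
    filter_upwards [self_mem_nhdsWithin] with y hy
    exact (h0 y hy).symm
  exact tendsto_nhds_unique h1 h2

lemma Wseq_eq_zero_outside {v w : ℝ → ℂ} {a b : ℝ}
    (hw : ∀ y, y < a ∨ b < y → w y = 0) :
    ∀ k y, (y < a ∨ b < y) → Wseq v w k y = 0 := by
  intro k
  induction k with
  | zero => exact fun y hy => hw y hy
  | succ k ih =>
    intro y hy
    show deriv (fun t => Wseq v w k t * v t) y = 0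
    have hev : (fun t => Wseq v w k t * v t) =ᶠ[nhds y] (fun _ => (0:ℂ)) := by
      rcases hy with hy | hy
      · filter_upwards [Iio_mem_nhds hy] with t ht
        rw [ih t (Or.inl ht), zero_mul]
      · filter_upwards [Ioi_mem_nhds hy] with t ht
        rw [ih t (Or.inr ht), zero_mul]
    rw [hev.deriv_eq]
    simp

lemma ibp_step {a b : ℝ} (hab : a ≤ b) {s : Set ℝ} (hs : IsOpen s) (hsub : Icc a b ⊆ s)
    {W v : ℝ → ℂ} (hW : ContDiffOn ℝ ∞ W s) (hv : ContDiffOn ℝ ∞ v s)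
    {ϱ : ℝ → ℝ} (hϱ : ContDiff ℝ ∞ ϱ)
    (hvg : ∀ y ∈ s, v y * ((deriv ϱ y : ℝ) : ℂ) = 1)
    (hWa : W a = 0) (hWb : W b = 0) :
    ‖∫ y in a..b, deriv (fun t => W t * v t) y * Complex.exp (Complex.I * (ϱ y : ℂ))‖
      = ‖∫ y in a..b, W y * Complex.exp (Complex.I * (ϱ y : ℂ))‖ := by
  set E : ℝ → ℂ := fun y => Complex.exp (Complex.I * (ϱ y : ℂ)) with hEdef
  have hEc : Continuous E := by
    rw [hEdef]
    exact Complex.continuous_exp.comp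
      (continuous_const.mul (Complex.continuous_ofReal.comp hϱ.continuous))
  have hϱd : ∀ x : ℝ, HasDerivAt ϱ (deriv ϱ x) x := fun x =>
    ((hϱ.differentiable (by simp)) x).hasDerivAt
  have hE : ∀ x : ℝ, HasDerivAt E (Complex.I * ((deriv ϱ x : ℝ) : ℂ) * E x) x := by
    intro x
    have h1 : HasDerivAt (fun y => ((ϱ y : ℝ) : ℂ)) ((deriv ϱ x : ℝ) : ℂ) x :=
      (hϱd x).ofReal_comp
    have h2 := (h1.const_mul Complex.I).cexp
    rw [hEdef]
    convert h2 using 1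
    ring
  have hWvc : ContDiffOn ℝ ∞ (fun t => W t * v t) s := hW.mul hv
  have hDc : ContDiffOn ℝ ∞ (deriv (fun t => W t * v t)) s :=
    hWvc.deriv_of_isOpen hs (by exact_mod_cast le_refl _)
  have hIccs : Set.uIcc a b ⊆ s := by rw [Set.uIcc_of_le hab]; exact hsub
  have hWd : ∀ x ∈ Set.uIcc a b, HasDerivAt (fun y => W y * v y * E y)
      (deriv (fun t => W t * v t) x * E x + Complex.I * (W x * E x)) x := by
    intro x hx
    have hxs : x ∈ s := hIccs hx
    have h1 : DifferentiableAt ℝ (fun t => W t * v t) x :=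
      ((hWvc.differentiableOn (by simp)) x hxs).differentiableAt
        (hs.mem_nhds hxs)
    have h2 := h1.hasDerivAt.mul (hE x)
    have hone := hvg x hxs
    exact h2.congr_deriv (by linear_combination (Complex.I * W x * E x) * hone)
  have hInt1 : IntervalIntegrable (fun y => deriv (fun t => W t * v t) y * E y) volume a b := by
    apply ContinuousOn.intervalIntegrable
    exact ((hDc.continuousOn.mono hIccs).mul (hEc.continuousOn))
  have hInt2 : IntervalIntegrable (fun y => Complex.I * (W y * E y)) volume a b := by
    apply ContinuousOn.intervalIntegrable
    exact continuousOn_const.mul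
      (((hW.continuousOn.mono hIccs)).mul (hEc.continuousOn))
  have hIntW : IntervalIntegrable (fun y => W y * E y) volume a b := by
    apply ContinuousOn.intervalIntegrable
    exact ((hW.continuousOn.mono hIccs)).mul (hEc.continuousOn)
  have hsum := intervalIntegral.integral_eq_sub_of_hasDerivAt hWd (hInt1.add hInt2)
  rw [hWa, hWb, zero_mul, zero_mul, zero_mul, zero_mul, sub_zero] at hsum
  rw [intervalIntegral.integral_add hInt1 hInt2, intervalIntegral.integral_const_mul] at hsum
  have heq : (∫ y in a..b, deriv (fun t => W t * v t) y * E y)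
      = -(Complex.I * ∫ y in a..b, W y * E y) :=
    eq_neg_of_add_eq_zero_left hsum
  rw [heq, norm_neg, norm_mul, Complex.norm_I, one_mul]

end Stmt11Aux

open Stmt11Aux in
theorem stmt_11 (cphase : ℕ → ℝ) (cweight : ℕ → ℝ) (A : ℝ) (hA : 0 ≤ A) :
    ∃ C : ℝ, 0 < C ∧
      ∀ (a b : ℝ), a < b →
        ∀ (w : ℝ → ℂ) (ϱ : ℝ → ℝ), ContDiff ℝ (⊤ : ℕ∞) w → ContDiff ℝ (⊤ : ℕ∞) ϱ →
          Function.support w ⊆ Set.Icc a b →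
          ∀ Q U Y Z R : ℝ, 0 < Q → 0 < U → 0 < Y → 0 < Z → 0 < R →
            (∀ i : ℕ, 2 ≤ i → ∀ x ∈ Set.Icc a b, |iteratedDeriv i ϱ x| ≤ cphase i * Y / Q ^ i) →
            (∀ j : ℕ, ∀ x ∈ Set.Icc a b, ‖iteratedDeriv j w x‖ ≤ cweight j * Z / U ^ j) →
            (∀ x ∈ Set.Icc a b, R ≤ |deriv ϱ x|) →
            ‖∫ y : ℝ, w y * Complex.exp (Complex.I * (ϱ y : ℂ))‖ ≤
              C * (b - a) * Z * (Y / (R ^ 2 * Q ^ 2) + 1 / (R * Q) + 1 / (R * U)) ^ A := by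
  classical
  choose d hd0 hd using claimB cphase cweight
  set n := ⌈A⌉₊ with hn
  set C := max 1 (max (cweight 0) (d n 0)) with hCdef
  have hC1 : (1:ℝ) ≤ C := le_max_left _ _
  refine ⟨C, lt_of_lt_of_le one_pos hC1, ?_⟩
  intro a b hab w ϱ hw' hϱ' hsupp Q U Y Z R hQ hU hY hZ hR hphase hweight hlow
  have hw : ContDiff ℝ ∞ w := hw'.of_le (by simp)
  have hϱ : ContDiff ℝ ∞ ϱ := hϱ'.of_le (by simp)
  have hba : (0:ℝ) ≤ b - a := by linarith
  set L := Y / (R ^ 2 * Q ^ 2) + 1 / (R * Q) + 1 / (R * U) with hLdef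
  have hL0 : 0 < L := by positivity
  set T := R * L with hTdef
  have hT0 : 0 < T := by positivity
  have hTeq : T = Y/(R*Q^2) + 1/Q + 1/U := by
    rw [hTdef, hLdef]
    field_simp
  have hQT : 1/Q ≤ T := by
    rw [hTeq]
    have h1 : 0 < Y/(R*Q^2) := by positivity
    have h2 : 0 < 1/U := by positivity
    linarith
  have hYT : Y/(Q^2*R) ≤ T := by
    rw [hTeq, show Q^2*R = R*Q^2 by ring]
    have h2 : 0 < 1/U := by positivity
    have h3 : 0 < 1/Q := by positivity
    linarith
  have hUT : 1/U ≤ T := by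
    rw [hTeq]
    have h1 : 0 < Y/(R*Q^2) := by positivity
    have h3 : 0 < 1/Q := by positivity
    linarith
  set v : ℝ → ℂ := fun y => (((deriv ϱ y : ℝ) : ℂ))⁻¹ with hvdef
  set s : Set ℝ := {y : ℝ | deriv ϱ y ≠ 0} with hsdef
  have hd1 : ContDiff ℝ ∞ (deriv ϱ) := (contDiff_infty_iff_deriv.mp hϱ).2
  have hso : IsOpen s := isOpen_compl_singleton.preimage hd1.continuous
  have hsub : Set.Icc a b ⊆ s := by
    intro y hy h0
    have := hlow y hy
    rw [h0] at this; simp at this; linarith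
  have hg : ContDiff ℝ ∞ (fun y => ((deriv ϱ y : ℝ) : ℂ)) := by
    simpa [Function.comp_def] using Complex.ofRealCLM.contDiff.comp hd1
  have hv : ContDiffOn ℝ ∞ v s := by
    rw [hvdef]
    exact ContDiffOn.inv hg.contDiffOn (fun y hy => Complex.ofReal_ne_zero.mpr hy)
  have hvg : ∀ y ∈ s, v y * ((deriv ϱ y : ℝ) : ℂ) = 1 := by
    intro y hy
    have hy' : deriv ϱ y ≠ 0 := hy
    exact inv_mul_cancel₀ (Complex.ofReal_ne_zero.mpr hy')
  have hwzero : ∀ y, y < a ∨ b < y → w y = 0 := by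
    intro y hy
    refine Function.support_subset_iff'.mp hsupp y ?_
    intro hmem
    rcases hy with hy | hy
    · exact absurd hmem.1 (by linarith)
    · exact absurd hmem.2 (by linarith)
  have hWzero := Wseq_eq_zero_outside (v := v) hwzero
  have hWcd : ∀ k, ContDiffOn ℝ ∞ (Wseq v w k) s := Wseq_contDiffOn hso hw hv
  have haIcc : a ∈ Set.Icc a b := ⟨le_refl a, hab.le⟩
  have hbIcc : b ∈ Set.Icc a b := ⟨hab.le, le_refl b⟩
  have hWa : ∀ k, Wseq v w k a = 0 := fun k =>
    eq_zero_of_left ((hWcd k).continuousOn.continuousAt (hso.mem_nhds (hsub haIcc)))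
      (fun y hy => hWzero k y (Or.inl hy))
  have hWb : ∀ k, Wseq v w k b = 0 := fun k =>
    eq_zero_of_right ((hWcd k).continuousOn.continuousAt (hso.mem_nhds (hsub hbIcc)))
      (fun y hy => hWzero k y (Or.inr hy))
  have key : ∀ m : ℕ, ‖∫ y in a..b, Wseq v w m y * Complex.exp (Complex.I * (ϱ y : ℂ))‖
      = ‖∫ y in a..b, w y * Complex.exp (Complex.I * (ϱ y : ℂ))‖ := by
    intro m
    induction m with
    | zero => rfl
    | succ m ih =>
      rw [← ih]
      have hWs : Wseq v w (m+1) = deriv (fun t => Wseq v w m t * v t) := rfl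
      rw [hWs]
      exact ibp_step hab.le hso hsub (hWcd m) hv hϱ hvg (hWa m) (hWb m)
  have hwa : w a = 0 :=
    eq_zero_of_left hw.continuous.continuousAt (fun y hy => hwzero y (Or.inl hy))
  have hsupp2 : Function.support (fun y => w y * Complex.exp (Complex.I * (ϱ y : ℂ)))
      ⊆ Set.Ioc a b := by
    intro y hy
    have hws : w y ≠ 0 := left_ne_zero_of_mul hy
    have hyIcc : y ∈ Set.Icc a b := hsupp hws
    rcases eq_or_lt_of_le hyIcc.1 with heq | hlt
    · exact absurd (heq ▸ hwa) hws
    · exact ⟨hlt, hyIcc.2⟩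
  have hglobal : (∫ y : ℝ, w y * Complex.exp (Complex.I * (ϱ y : ℂ)))
      = ∫ y in a..b, w y * Complex.exp (Complex.I * (ϱ y : ℂ)) :=
    (intervalIntegral.integral_eq_integral_of_support_subset hsupp2).symm
  rw [hglobal]
  have hE1 : ∀ x : ℝ, ‖Complex.exp (Complex.I * (ϱ x : ℂ))‖ = 1 := by
    intro x
    rw [mul_comm]
    simpa using Complex.norm_exp_ofReal_mul_I (ϱ x)
  have habs : |b - a| = b - a := abs_of_nonneg hba
  have hIoc : Set.uIoc a b ⊆ Set.Icc a b := by
    rw [Set.uIoc_of_le hab.le]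
    exact Set.Ioc_subset_Icc_self
  rcases le_or_gt 1 L with hL1 | hL1
  · -- easy case : L ≥ 1
    have hcw0 : ∀ x ∈ Set.uIoc a b, ‖w x * Complex.exp (Complex.I * (ϱ x : ℂ))‖
        ≤ cweight 0 * Z := by
      intro x hx
      rw [norm_mul, hE1 x, mul_one]
      simpa using hweight 0 x (hIoc hx)
    have h2 := intervalIntegral.norm_integral_le_of_norm_le_const hcw0
    have hLA : 1 ≤ L ^ A := Real.one_le_rpow hL1 hA
    have hC2 : cweight 0 ≤ C := le_trans (le_max_left _ _) (le_max_right _ _)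
    have hC0 : (0:ℝ) ≤ C := by linarith
    calc ‖∫ y in a..b, w y * Complex.exp (Complex.I * (ϱ y : ℂ))‖
        ≤ cweight 0 * Z * |b - a| := h2
      _ = cweight 0 * Z * (b - a) := by rw [habs]
      _ ≤ C * Z * (b - a) := by
          refine mul_le_mul_of_nonneg_right (mul_le_mul_of_nonneg_right hC2 hZ.le) hba
      _ = C * (b - a) * Z * 1 := by ring
      _ ≤ C * (b - a) * Z * L ^ A := by
          refine mul_le_mul_of_nonneg_left hLA ?_
          positivity
  · -- main case : L < 1
    rw [← key n]
    have hbnd : ∀ x ∈ Set.uIoc a b, ‖Wseq v w n x * Complex.exp (Complex.I * (ϱ x : ℂ))‖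
        ≤ d n 0 * Z * T^n / R^n := by
      intro x hx
      have hxIcc : x ∈ Set.Icc a b := hIoc hx
      have hb2 := hd n a b w ϱ hw hϱ Q U Y Z R T hQ hU hY hZ hR hT0 hphase hweight hlow
        hQT hYT hUT 0 x hxIcc
      rw [← hvdef] at hb2
      rw [iteratedDeriv_zero] at hb2
      rw [norm_mul, hE1 x, mul_one]
      simpa using hb2
    have h3 := intervalIntegral.norm_integral_le_of_norm_le_const hbnd
    have hTL : T^n / R^n = L^n := by
      rw [hTdef, mul_pow]
      exact mul_div_cancel_left₀ _ (pow_ne_zero n hR.ne')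
    have hLA : L^(n:ℝ) ≤ L^A := Real.rpow_le_rpow_of_exponent_ge hL0 hL1.le (Nat.le_ceil A)
    rw [Real.rpow_natCast] at hLA
    have hdnC : d n 0 ≤ C := le_trans (le_max_right _ _) (le_max_right _ _)
    have hC0 : (0:ℝ) ≤ C := by linarith
    calc ‖∫ y in a..b, Wseq v w n y * Complex.exp (Complex.I * (ϱ y : ℂ))‖
        ≤ d n 0 * Z * T^n / R^n * |b - a| := h3
      _ = d n 0 * Z * (T^n / R^n) * (b - a) := by rw [habs]; ring
      _ = d n 0 * Z * L^n * (b - a) := by rw [hTL]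
      _ ≤ C * (b - a) * Z * L ^ A := by
          have h4 : d n 0 * L^n ≤ C * L ^ A := by
            calc d n 0 * L^n ≤ C * L^n :=
                  mul_le_mul_of_nonneg_right hdnC (pow_nonneg hL0.le n)
              _ ≤ C * L ^ A := mul_le_mul_of_nonneg_left hLA hC0
          calc d n 0 * Z * L^n * (b - a) = (d n 0 * L^n) * (Z * (b - a)) := by ring
            _ ≤ (C * L ^ A) * (Z * (b - a)) :=
                mul_le_mul_of_nonneg_right h4 (mul_nonneg hZ.le hba)
            _ = C * (b - a) * Z * L ^ A := by ring
end

section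
/- Let a < b be reals, let f : [a,b] → ℝ be smooth with f''(x) ≥ λ > 0 for all x ∈ [a,b], and let w : ℝ → ℝ be a smooth function supported in [a,b] with total variation V (so, since w vanishes at a and b, V = ∫_a^b |w'(x)| dx). Then | ∫_a^b e(f(x))·w(x) dx | ≤ 4V/√(πλ). -/
open MeasureTheory Complex intervalIntegral Set

/-- `e(x) = exp(2πix)`. -/
noncomputable def e2pi (x : ℝ) : ℂ := Complex.exp (2 * Real.pi * Complex.I * x)

lemma e2pi_norm (x : ℝ) : ‖e2pi x‖ = 1 := by
  simp [e2pi, Complex.norm_exp]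

lemma e2pi_hasDerivAt {f f' : ℝ → ℝ} {x : ℝ} (hf : HasDerivAt f (f' x) x) :
    HasDerivAt (fun y => e2pi (f y)) (2 * Real.pi * Complex.I * f' x * e2pi (f x)) x := by
  have h1 : HasDerivAt (fun y => ((f y : ℝ) : ℂ)) (f' x) x := hf.ofReal_comp
  have h2 := (h1.const_mul ((2 : ℂ) * Real.pi * Complex.I)).cexp
  convert h2 using 1
  simp [e2pi]
  rw [show e2pi (f x) = cexp (2 * (Real.pi : ℂ) * I * (f x : ℂ)) from rfl]
  ring

lemma vdc_pos (f f' f'' : ℝ → ℝ)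
    (hd1 : ∀ x, HasDerivAt f (f' x) x)
    (hd2 : ∀ x, HasDerivAt f' (f'' x) x)
    (hc2 : Continuous f'')
    (c d δ : ℝ) (hcd : c ≤ d) (hδ : 0 < δ)
    (hlow : ∀ x ∈ Set.Icc c d, δ ≤ f' x)
    (hconv : ∀ x ∈ Set.Icc c d, 0 ≤ f'' x) :
    ‖∫ x in c..d, e2pi (f x)‖ ≤ 1 / (Real.pi * δ) := by
  have hπ : (0:ℝ) < Real.pi := Real.pi_pos
  have hc1 : Continuous f' := by
    rw [continuous_iff_continuousAt]; exact fun x => (hd2 x).continuousAt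
  have huIcc : uIcc c d = Icc c d := uIcc_of_le hcd
  have hpos : ∀ x ∈ Icc c d, 0 < f' x := fun x hx => lt_of_lt_of_le hδ (hlow x hx)
  set G : ℝ → ℂ := fun x => -Complex.I / (2 * Real.pi * f' x) * e2pi (f x) with hG
  set h : ℝ → ℂ := fun x => Complex.I * f'' x / (2 * Real.pi * (f' x)^2) * e2pi (f x) with hh
  have hGderiv : ∀ x ∈ Icc c d, HasDerivAt G (h x + e2pi (f x)) x := by
    intro x hx
    have hne : ((2:ℂ) * Real.pi * f' x) ≠ 0 := by
      simp only [ne_eq, mul_eq_zero]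
      push_neg
      refine ⟨⟨by norm_num, by exact_mod_cast hπ.ne'⟩, by exact_mod_cast (hpos x hx).ne'⟩
    have h1 : HasDerivAt (fun y => ((2:ℂ) * Real.pi * f' y)) (2 * Real.pi * f'' x) x := by
      have := ((hd2 x).ofReal_comp).const_mul ((2:ℂ) * Real.pi)
      convert this using 1 <;> push_cast <;> ring
    have h2 : HasDerivAt (fun y => -Complex.I / (2 * Real.pi * f' y))
        (Complex.I * (2 * Real.pi * f'' x) / (2 * Real.pi * f' x)^2) x := by
      have := ((hasDerivAt_inv hne).comp x h1).const_mul (-Complex.I)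
      have he : ∀ y, -Complex.I / (2 * Real.pi * f' y) = -Complex.I * ((2:ℂ) * Real.pi * f' y)⁻¹ := by
        intro y; rw [div_eq_mul_inv]
      simp only [he]
      refine this.congr_deriv ?_
      ring
    have h3 := h2.mul (e2pi_hasDerivAt (hd1 x))
    refine h3.congr_deriv ?_
    have hfx : ((f' x : ℂ)) ≠ 0 := by exact_mod_cast (hpos x hx).ne'
    have hπc : ((Real.pi : ℂ)) ≠ 0 := by exact_mod_cast hπ.ne'
    simp only [hh]
    field_simp
    ring_nf
    simp [Complex.I_sq]
  -- continuity facts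
  have hcf : Continuous f := by
    rw [continuous_iff_continuousAt]; exact fun x => (hd1 x).continuousAt
  have hce : Continuous fun x => e2pi (f x) := by
    apply Complex.continuous_exp.comp
    exact (continuous_const.mul (Complex.continuous_ofReal.comp hcf))
  have hInt_e : IntervalIntegrable (fun x => e2pi (f x)) volume c d :=
    hce.intervalIntegrable c d
  have hne' : ∀ x ∈ Icc c d, ((2:ℝ) * Real.pi * (f' x)^2) ≠ 0 := by
    intro x hx
    have := hpos x hx
    positivity
  -- norm of h on Icc
  have hnorm_h : ∀ x ∈ Icc c d, ‖h x‖ = f'' x / (2 * Real.pi * (f' x)^2) := by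
    intro x hx
    have h1 := hconv x hx
    have h2 := (hpos x hx).le
    simp only [hh, norm_mul, norm_div, e2pi_norm, mul_one, norm_pow, map_mul, map_pow,
      Complex.norm_I, one_mul, Complex.norm_real, Real.norm_eq_abs, Complex.norm_two]
    rw [_root_.abs_of_nonneg h1, _root_.abs_of_nonneg hπ.le, _root_.abs_of_nonneg h2]
  -- continuity of h on Icc
  have hch : ContinuousOn h (Icc c d) := by
    apply ContinuousOn.mul
    · apply ContinuousOn.div
      · exact (continuous_const.mul (Complex.continuous_ofReal.comp hc2)).continuousOn
      · exact (continuous_const.mul ((Complex.continuous_ofReal.comp hc1).pow 2)).continuousOn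
      · intro x hx
        have hfx : ((f' x : ℂ)) ≠ 0 := by exact_mod_cast (hpos x hx).ne'
        have hπc : ((Real.pi : ℂ)) ≠ 0 := by exact_mod_cast hπ.ne'
        simp [hfx, hπc]
    · exact hce.continuousOn
  have hInt_h : IntervalIntegrable h volume c d := by
    apply ContinuousOn.intervalIntegrable
    rwa [huIcc]
  -- FTC
  have hFTC : ∫ x in c..d, (h x + e2pi (f x)) = G d - G c := by
    apply integral_eq_sub_of_hasDerivAt
    · rw [huIcc]; exact hGderiv
    · exact hInt_h.add hInt_e
  have hsplit : ∫ x in c..d, e2pi (f x) = G d - G c - ∫ x in c..d, h x := by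
    rw [← hFTC, integral_add hInt_h hInt_e]; ring
  -- real antiderivative for the norm of h
  set H : ℝ → ℝ := fun x => -(2 * Real.pi * f' x)⁻¹ with hH
  have hHderiv : ∀ x ∈ Icc c d, HasDerivAt H (f'' x / (2 * Real.pi * (f' x)^2)) x := by
    intro x hx
    have hne : (2 * Real.pi * f' x) ≠ 0 := by
      have := hpos x hx; positivity
    have h1 : HasDerivAt (fun y => 2 * Real.pi * f' y) (2 * Real.pi * f'' x) x :=
      (hd2 x).const_mul (2 * Real.pi)
    have := (h1.inv hne).neg
    refine this.congr_deriv ?_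
    have h2 := (hpos x hx).ne'
    field_simp
  have hIntH : IntervalIntegrable (fun x => f'' x / (2 * Real.pi * (f' x)^2)) volume c d := by
    apply ContinuousOn.intervalIntegrable
    rw [huIcc]
    exact ContinuousOn.div hc2.continuousOn
      (continuous_const.mul (hc1.pow 2)).continuousOn hne'
  have hFTC2 : ∫ x in c..d, f'' x / (2 * Real.pi * (f' x)^2) = H d - H c := by
    apply integral_eq_sub_of_hasDerivAt
    · rw [huIcc]; exact hHderiv
    · exact hIntH
  have hintnorm : ‖∫ x in c..d, h x‖ ≤ H d - H c := by
    calc ‖∫ x in c..d, h x‖ ≤ ∫ x in c..d, ‖h x‖ :=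
          intervalIntegral.norm_integral_le_integral_norm hcd
      _ = ∫ x in c..d, f'' x / (2 * Real.pi * (f' x)^2) := by
          apply intervalIntegral.integral_congr
          rw [huIcc]; exact fun x hx => hnorm_h x hx
      _ = H d - H c := hFTC2
  have hGnorm : ∀ x ∈ Icc c d, ‖G x‖ = (2 * Real.pi * f' x)⁻¹ := by
    intro x hx
    have h2 := (hpos x hx).le
    simp only [hG, norm_mul, norm_div, norm_neg, Complex.norm_I, e2pi_norm, mul_one,
      Complex.norm_real, Real.norm_eq_abs, map_mul, Complex.norm_two]
    rw [_root_.abs_of_nonneg hπ.le, _root_.abs_of_nonneg h2, one_div]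
  have hcle : c ∈ Icc c d := ⟨le_rfl, hcd⟩
  have hdle : d ∈ Icc c d := ⟨hcd, le_rfl⟩
  rw [hsplit]
  have step1 : ‖G d - G c - ∫ x in c..d, h x‖ ≤ ‖G d‖ + ‖G c‖ + ‖∫ x in c..d, h x‖ :=
    le_trans (norm_sub_le _ _) (add_le_add (norm_sub_le _ _) le_rfl)
  refine le_trans step1 ?_
  rw [hGnorm d hdle, hGnorm c hcle]
  have hsum : (2 * Real.pi * f' d)⁻¹ + (2 * Real.pi * f' c)⁻¹ + (H d - H c)
      = 1 / (Real.pi * f' c) := by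
    have h1 := (hpos c hcle).ne'
    have h2 := (hpos d hdle).ne'
    have h3 := hπ.ne'
    simp only [hH]
    field_simp
    ring
  calc (2 * Real.pi * f' d)⁻¹ + (2 * Real.pi * f' c)⁻¹ + ‖∫ x in c..d, h x‖
      ≤ (2 * Real.pi * f' d)⁻¹ + (2 * Real.pi * f' c)⁻¹ + (H d - H c) := by
        exact add_le_add le_rfl hintnorm
    _ = 1 / (Real.pi * f' c) := hsum
    _ ≤ 1 / (Real.pi * δ) := by
        gcongr
        exact hlow c hcle

lemma vdc_neg (f f' f'' : ℝ → ℝ)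
    (hd1 : ∀ x, HasDerivAt f (f' x) x)
    (hd2 : ∀ x, HasDerivAt f' (f'' x) x)
    (hc2 : Continuous f'')
    (c d δ : ℝ) (hcd : c ≤ d) (hδ : 0 < δ)
    (hlow : ∀ x ∈ Set.Icc c d, f' x ≤ -δ)
    (hconv : ∀ x ∈ Set.Icc c d, 0 ≤ f'' x) :
    ‖∫ x in c..d, e2pi (f x)‖ ≤ 1 / (Real.pi * δ) := by
  have hmem : ∀ x ∈ Set.Icc c d, c + d - x ∈ Set.Icc c d := by
    intro x hx
    exact ⟨by linarith [hx.2], by linarith [hx.1]⟩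
  have hrefl : (∫ x in c..d, e2pi (f x)) = ∫ x in c..d, e2pi (f (c + d - x)) := by
    rw [intervalIntegral.integral_comp_sub_left (fun t => e2pi (f t)) (c + d)]
    norm_num
  have hinner : ∀ x : ℝ, HasDerivAt (fun y => c + d - y) (-1 : ℝ) x := by
    intro x
    simpa using (hasDerivAt_id x).const_sub (c + d)
  rw [hrefl]
  apply vdc_pos (fun x => f (c + d - x)) (fun x => -f' (c + d - x))
      (fun x => f'' (c + d - x))
  · intro x
    have := (hd1 (c + d - x)).comp x (hinner x)
    refine this.congr_deriv ?_
    ring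
  · intro x
    have := (hd2 (c + d - x)).comp x (hinner x)
    have h2 := this.neg
    refine h2.congr_deriv ?_
    ring
  · exact hc2.comp (by continuity)
  · exact hcd
  · exact hδ
  · intro x hx
    have := hlow _ (hmem x hx)
    linarith
  · intro x hx
    exact hconv _ (hmem x hx)

lemma vdc_triv (f : ℝ → ℝ) (c d : ℝ) (hcd : c ≤ d) :
    ‖∫ x in c..d, e2pi (f x)‖ ≤ d - c := by
  have h := intervalIntegral.norm_integral_le_of_norm_le_const
    (C := 1) (f := fun x => e2pi (f x)) (a := c) (b := d)
    (fun x _ => le_of_eq (e2pi_norm (f x)))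
  rwa [one_mul, _root_.abs_of_nonneg (by linarith : (0:ℝ) ≤ d - c)] at h

lemma mvt_gap (f' f'' : ℝ → ℝ) (hd2 : ∀ x, HasDerivAt f' (f'' x) x) (c d μ : ℝ)
    (hcd : c ≤ d) (hf'' : ∀ x ∈ Set.Icc c d, μ ≤ f'' x) :
    μ * (d - c) ≤ f' d - f' c := by
  have hder : ∀ x : ℝ, HasDerivAt (fun x => f' x - μ * x) (f'' x - μ) x := by
    intro x
    exact ((hd2 x).sub ((hasDerivAt_id' x).const_mul μ)).congr_deriv (by ring)
  have h : MonotoneOn (fun x => f' x - μ * x) (Set.Icc c d) := by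
    apply monotoneOn_of_deriv_nonneg (convex_Icc c d)
    · exact Continuous.continuousOn (by
        rw [continuous_iff_continuousAt]; exact fun x => (hder x).continuousAt)
    · intro x _
      exact (hder x).differentiableAt.differentiableWithinAt
    · intro x hx
      rw [interior_Icc] at hx
      rw [(hder x).deriv]
      have := hf'' x ⟨hx.1.le, hx.2.le⟩
      linarith
  have := h ⟨le_rfl, hcd⟩ ⟨hcd, le_rfl⟩ hcd
  simp only at this
  linarith

lemma e2pi_cont {f : ℝ → ℝ} (hf : Continuous f) : Continuous fun x => e2pi (f x) :=
  Complex.continuous_exp.comp (continuous_const.mul (Complex.continuous_ofReal.comp hf))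

lemma vdc_right (f f' f'' : ℝ → ℝ)
    (hd1 : ∀ x, HasDerivAt f (f' x) x)
    (hd2 : ∀ x, HasDerivAt f' (f'' x) x)
    (hc2 : Continuous f'')
    (c d δ μ : ℝ) (hcd : c ≤ d) (hδ : 0 < δ) (hμ : 0 < μ)
    (hf'' : ∀ x ∈ Set.Icc c d, μ ≤ f'' x)
    (hfc : -δ ≤ f' c) :
    ‖∫ x in c..d, e2pi (f x)‖ ≤ 2 * δ / μ + 1 / (Real.pi * δ) := by
  have hπ : (0:ℝ) < Real.pi := Real.pi_pos
  have hcf : Continuous f := by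
    rw [continuous_iff_continuousAt]; exact fun x => (hd1 x).continuousAt
  have hc1 : Continuous f' := by
    rw [continuous_iff_continuousAt]; exact fun x => (hd2 x).continuousAt
  have hconv : ∀ x ∈ Set.Icc c d, 0 ≤ f'' x := fun x hx => le_trans hμ.le (hf'' x hx)
  -- monotonicity-with-gap of f' on [c,d]
  have hgap : ∀ x ∈ Set.Icc c d, ∀ y ∈ Set.Icc c d, x ≤ y → f' x + μ * (y - x) ≤ f' y := by
    intro x hx y hy hxy
    have := mvt_gap f' f'' hd2 x y μ hxy (fun t ht =>
      hf'' t ⟨le_trans hx.1 ht.1, le_trans ht.2 hy.2⟩)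
    linarith
  have hmono : ∀ x ∈ Set.Icc c d, ∀ y ∈ Set.Icc c d, x ≤ y → f' x ≤ f' y := by
    intro x hx y hy hxy
    have := hgap x hx y hy hxy
    nlinarith
  have hpinv : 0 < 1 / (Real.pi * δ) := by positivity
  by_cases hfd : f' d ≤ δ
  · -- whole interval is "middle": small length
    have hlen : μ * (d - c) ≤ 2 * δ := by
      have := mvt_gap f' f'' hd2 c d μ hcd hf''
      linarith
    have h1 : d - c ≤ 2 * δ / μ := by
      rw [le_div_iff₀ hμ]; linarith
    have := vdc_triv f c d hcd
    linarith
  · push_neg at hfd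
    by_cases hfc' : δ ≤ f' c
    · -- whole interval non-stationary positive
      have := vdc_pos f f' f'' hd1 hd2 hc2 c d δ hcd hδ
        (fun x hx => le_trans hfc' (hmono c ⟨le_rfl, hcd⟩ x hx hx.1)) hconv
      have h0 : (0:ℝ) ≤ 2 * δ / μ := by positivity
      linarith
    · push_neg at hfc'
      -- find q with f' q = δ
      obtain ⟨q, hqmem, hq⟩ : ∃ q ∈ Set.Icc c d, f' q = δ := by
        have h := intermediate_value_Icc hcd hc1.continuousOn
        have : δ ∈ Set.Icc (f' c) (f' d) := ⟨hfc'.le, hfd.le⟩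
        obtain ⟨q, hqmem, hq⟩ := h this
        exact ⟨q, hqmem, hq⟩
      have hsplit : (∫ x in c..d, e2pi (f x))
          = (∫ x in c..q, e2pi (f x)) + ∫ x in q..d, e2pi (f x) :=
        (intervalIntegral.integral_add_adjacent_intervals
          ((e2pi_cont hcf).intervalIntegrable c q)
          ((e2pi_cont hcf).intervalIntegrable q d)).symm
      have hbd1 : ‖∫ x in c..q, e2pi (f x)‖ ≤ 2 * δ / μ := by
        have hlen : μ * (q - c) ≤ 2 * δ := by
          have := mvt_gap f' f'' hd2 c q μ hqmem.1 (fun t ht =>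
            hf'' t ⟨ht.1, le_trans ht.2 hqmem.2⟩)
          rw [hq] at this
          linarith
        have h1 : q - c ≤ 2 * δ / μ := by
          rw [le_div_iff₀ hμ]; linarith
        have := vdc_triv f c q hqmem.1
        linarith
      have hbd2 : ‖∫ x in q..d, e2pi (f x)‖ ≤ 1 / (Real.pi * δ) := by
        apply vdc_pos f f' f'' hd1 hd2 hc2 q d δ hqmem.2 hδ
        · intro x hx
          rw [← hq]
          exact hmono q hqmem x ⟨le_trans hqmem.1 hx.1, hx.2⟩ hx.1
        · intro x hx
          exact hconv x ⟨le_trans hqmem.1 hx.1, hx.2⟩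
      rw [hsplit]
      calc ‖(∫ x in c..q, e2pi (f x)) + ∫ x in q..d, e2pi (f x)‖
          ≤ ‖∫ x in c..q, e2pi (f x)‖ + ‖∫ x in q..d, e2pi (f x)‖ := norm_add_le _ _
        _ ≤ 2 * δ / μ + 1 / (Real.pi * δ) := add_le_add hbd1 hbd2

lemma vdc_full (f f' f'' : ℝ → ℝ)
    (hd1 : ∀ x, HasDerivAt f (f' x) x)
    (hd2 : ∀ x, HasDerivAt f' (f'' x) x)
    (hc2 : Continuous f'')
    (c d δ μ : ℝ) (hcd : c ≤ d) (hδ : 0 < δ) (hμ : 0 < μ)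
    (hf'' : ∀ x ∈ Set.Icc c d, μ ≤ f'' x) :
    ‖∫ x in c..d, e2pi (f x)‖ ≤ 2 * δ / μ + 2 / (Real.pi * δ) := by
  have hπ : (0:ℝ) < Real.pi := Real.pi_pos
  have hcf : Continuous f := by
    rw [continuous_iff_continuousAt]; exact fun x => (hd1 x).continuousAt
  have hc1 : Continuous f' := by
    rw [continuous_iff_continuousAt]; exact fun x => (hd2 x).continuousAt
  have hconv : ∀ x ∈ Set.Icc c d, 0 ≤ f'' x := fun x hx => le_trans hμ.le (hf'' x hx)
  have hmono : ∀ x ∈ Set.Icc c d, ∀ y ∈ Set.Icc c d, x ≤ y → f' x ≤ f' y := by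
    intro x hx y hy hxy
    have := mvt_gap f' f'' hd2 x y μ hxy (fun t ht =>
      hf'' t ⟨le_trans hx.1 ht.1, le_trans ht.2 hy.2⟩)
    nlinarith
  have hpinv : (0:ℝ) < 1 / (Real.pi * δ) := by positivity
  have h2δ : (0:ℝ) ≤ 2 * δ / μ := by positivity
  have heq : 2 * δ / μ + 2 / (Real.pi * δ) = 1 / (Real.pi * δ) + (2 * δ / μ + 1 / (Real.pi * δ)) := by
    ring
  rw [heq]
  by_cases hfc : -δ ≤ f' c
  · have := vdc_right f f' f'' hd1 hd2 hc2 c d δ μ hcd hδ hμ hf'' hfc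
    linarith
  · push_neg at hfc
    by_cases hfd : f' d ≤ -δ
    · have := vdc_neg f f' f'' hd1 hd2 hc2 c d δ hcd hδ
        (fun x hx => le_trans (hmono x hx d ⟨hcd, le_rfl⟩ hx.2) hfd) hconv
      linarith
    · push_neg at hfd
      obtain ⟨p, hpmem, hp⟩ : ∃ p ∈ Set.Icc c d, f' p = -δ := by
        have h := intermediate_value_Icc hcd hc1.continuousOn
        exact h ⟨hfc.le, hfd.le⟩
      have hsplit : (∫ x in c..d, e2pi (f x))
          = (∫ x in c..p, e2pi (f x)) + ∫ x in p..d, e2pi (f x) :=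
        (intervalIntegral.integral_add_adjacent_intervals
          ((e2pi_cont hcf).intervalIntegrable c p)
          ((e2pi_cont hcf).intervalIntegrable p d)).symm
      have hbd1 : ‖∫ x in c..p, e2pi (f x)‖ ≤ 1 / (Real.pi * δ) := by
        apply vdc_neg f f' f'' hd1 hd2 hc2 c p δ hpmem.1 hδ
        · intro x hx
          rw [← hp]
          exact hmono x ⟨hx.1, le_trans hx.2 hpmem.2⟩ p hpmem hx.2
        · intro x hx
          exact hconv x ⟨hx.1, le_trans hx.2 hpmem.2⟩
      have hbd2 : ‖∫ x in p..d, e2pi (f x)‖ ≤ 2 * δ / μ + 1 / (Real.pi * δ) := by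
        apply vdc_right f f' f'' hd1 hd2 hc2 p d δ μ hpmem.2 hδ hμ
        · intro x hx
          exact hf'' x ⟨le_trans hpmem.1 hx.1, hx.2⟩
        · rw [hp]
      rw [hsplit]
      calc ‖(∫ x in c..p, e2pi (f x)) + ∫ x in p..d, e2pi (f x)‖
          ≤ ‖∫ x in c..p, e2pi (f x)‖ + ‖∫ x in p..d, e2pi (f x)‖ := norm_add_le _ _
        _ ≤ 1 / (Real.pi * δ) + (2 * δ / μ + 1 / (Real.pi * δ)) := add_le_add hbd1 hbd2

lemma vdc_main (f f' f'' : ℝ → ℝ)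
    (hd1 : ∀ x, HasDerivAt f (f' x) x)
    (hd2 : ∀ x, HasDerivAt f' (f'' x) x)
    (hc2 : Continuous f'')
    (c d lam : ℝ) (hcd : c ≤ d) (hlam : 0 < lam)
    (hf'' : ∀ x ∈ Set.Icc c d, lam ≤ f'' x) :
    ‖∫ x in c..d, e2pi (f x)‖ ≤ 4 / Real.sqrt (Real.pi * lam) := by
  have hπ : (0:ℝ) < Real.pi := Real.pi_pos
  set s := Real.sqrt (Real.pi * lam) with hs
  have hs0 : 0 < s := Real.sqrt_pos.mpr (by positivity)
  have hs2 : s ^ 2 = Real.pi * lam := Real.sq_sqrt (by positivity)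
  have hδ : (0:ℝ) < s / Real.pi := by positivity
  have h := vdc_full f f' f'' hd1 hd2 hc2 c d (s / Real.pi) lam hcd hδ hlam hf''
  have heq : 2 * (s / Real.pi) / lam + 2 / (Real.pi * (s / Real.pi)) = 4 / s := by
    have h1 : Real.pi * (s / Real.pi) = s := by field_simp
    have h2 : 2 * (s / Real.pi) / lam = 2 / s := by
      rw [div_eq_div_iff (by positivity) hs0.ne']
      nlinarith [hs2]
    rw [h1, h2]
    ring
  rw [heq] at h
  exact h

theorem stmt_12 (a b : ℝ) (hab : a < b) (f : ℝ → ℝ) (hf : ContDiff ℝ (⊤ : ℕ∞) f)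
    (lam : ℝ) (hlam : 0 < lam) (hf'' : ∀ x ∈ Set.Icc a b, lam ≤ iteratedDeriv 2 f x)
    (w : ℝ → ℝ) (hw : ContDiff ℝ (⊤ : ℕ∞) w) (hsupp : Function.support w ⊆ Set.Icc a b)
    (V : ℝ) (hV : V = ∫ x in a..b, |deriv w x|) :
    ‖∫ x in a..b, e2pi (f x) * (w x : ℂ)‖ ≤ 4 * V / Real.sqrt (Real.pi * lam) := by
  have hπ : (0:ℝ) < Real.pi := Real.pi_pos
  have hab' : a ≤ b := hab.le
  -- derivatives of f
  have hfi : ContDiff ℝ ((⊤:ℕ∞):WithTop ℕ∞) f := hf.of_le (by simp)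
  have hwi : ContDiff ℝ ((⊤:ℕ∞):WithTop ℕ∞) w := hw.of_le (by simp)
  have hf1 : ContDiff ℝ ((⊤:ℕ∞):WithTop ℕ∞) (deriv f) := (contDiff_infty_iff_deriv.mp hfi).2
  have hf2 : ContDiff ℝ ((⊤:ℕ∞):WithTop ℕ∞) (deriv (deriv f)) := (contDiff_infty_iff_deriv.mp hf1).2
  have hd1 : ∀ x, HasDerivAt f (deriv f x) x :=
    fun x => (hfi.differentiable (by simp) x).hasDerivAt
  have hd2 : ∀ x, HasDerivAt (deriv f) (deriv (deriv f) x) x :=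
    fun x => (hf1.differentiable (by simp) x).hasDerivAt
  have hiter : iteratedDeriv 2 f = deriv (deriv f) := by
    rw [iteratedDeriv_succ, iteratedDeriv_one]
  rw [hiter] at hf''
  have hcf : Continuous f := hf.continuous
  -- derivative of w
  have hw1 : Continuous (deriv w) := ((contDiff_infty_iff_deriv.mp hwi).2).continuous
  have hdw : ∀ x, HasDerivAt w (deriv w x) x :=
    fun x => (hwi.differentiable (by simp) x).hasDerivAt
  -- w vanishes at a and b
  have hwzero : ∀ x, x ∉ Set.Icc a b → w x = 0 := by
    intro x hx
    by_contra h
    exact hx (hsupp h)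
  have hwa : w a = 0 := by
    have h1 : Filter.Tendsto w (nhdsWithin a (Set.Iio a)) (nhds (w a)) :=
      (hw.continuous.continuousAt.continuousWithinAt).tendsto
    have h2 : Filter.Tendsto w (nhdsWithin a (Set.Iio a)) (nhds 0) := by
      apply Filter.Tendsto.congr' _ tendsto_const_nhds
      filter_upwards [self_mem_nhdsWithin] with x hx
      exact (hwzero x (fun hmem => absurd hmem.1 (not_le.mpr hx))).symm
    exact tendsto_nhds_unique h1 h2
  have hwb : w b = 0 := by
    have h1 : Filter.Tendsto w (nhdsWithin b (Set.Ioi b)) (nhds (w b)) :=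
      (hw.continuous.continuousAt.continuousWithinAt).tendsto
    have h2 : Filter.Tendsto w (nhdsWithin b (Set.Ioi b)) (nhds 0) := by
      apply Filter.Tendsto.congr' _ tendsto_const_nhds
      filter_upwards [self_mem_nhdsWithin] with x hx
      exact (hwzero x (fun hmem => absurd hmem.2 (not_le.mpr hx))).symm
    exact tendsto_nhds_unique h1 h2
  -- the antiderivative F
  set F : ℝ → ℂ := fun x => ∫ t in a..x, e2pi (f t) with hF
  have hFderiv : ∀ x, HasDerivAt F (e2pi (f x)) x :=
    fun x => ((e2pi_cont hcf).integral_hasStrictDerivAt a x).hasDerivAt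
  -- integration by parts
  have hibp := intervalIntegral.integral_mul_deriv_eq_deriv_mul
    (u := F) (v := fun x => ((w x : ℝ) : ℂ)) (u' := fun x => e2pi (f x))
    (v' := fun x => ((deriv w x : ℝ) : ℂ)) (a := a) (b := b)
    (fun x _ => hFderiv x)
    (fun x _ => (hdw x).ofReal_comp)
    ((e2pi_cont hcf).intervalIntegrable a b)
    ((Complex.continuous_ofReal.comp hw1).intervalIntegrable a b)
  simp only [hwa, hwb, Complex.ofReal_zero, mul_zero, zero_sub, zero_mul, sub_zero] at hibp
  have hmain : (∫ x in a..b, e2pi (f x) * (w x : ℂ))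
      = -(∫ x in a..b, F x * ((deriv w x : ℝ) : ℂ)) := by
    rw [hibp]; ring_nf
  -- bound on F
  have hFbd : ∀ x ∈ Set.Icc a b, ‖F x‖ ≤ 4 / Real.sqrt (Real.pi * lam) := by
    intro x hx
    exact vdc_main f (deriv f) (deriv (deriv f)) hd1 hd2 hf2.continuous a x lam hx.1 hlam
      (fun t ht => hf'' t ⟨ht.1, le_trans ht.2 hx.2⟩)
  -- continuity of F
  have hFcont : Continuous F := by
    rw [continuous_iff_continuousAt]; exact fun x => (hFderiv x).continuousAt
  set s := Real.sqrt (Real.pi * lam) with hs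
  have hs0 : 0 < s := Real.sqrt_pos.mpr (by positivity)
  rw [hmain, norm_neg]
  calc ‖∫ x in a..b, F x * ((deriv w x : ℝ) : ℂ)‖
      ≤ ∫ x in a..b, ‖F x * ((deriv w x : ℝ) : ℂ)‖ :=
        intervalIntegral.norm_integral_le_integral_norm hab'
    _ ≤ ∫ x in a..b, (4 / s) * |deriv w x| := by
        apply intervalIntegral.integral_mono_on hab'
        · exact ((hFcont.mul (Complex.continuous_ofReal.comp hw1)).norm).intervalIntegrable a b
        · exact ((continuous_const.mul hw1.abs)).intervalIntegrable a b
        · intro x hx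
          rw [norm_mul]
          have h1 : ‖((deriv w x : ℝ) : ℂ)‖ = |deriv w x| := by rw [Complex.norm_real, Real.norm_eq_abs]
          rw [h1]
          apply mul_le_mul_of_nonneg_right (hFbd x hx) (abs_nonneg _)
    _ = (4 / s) * ∫ x in a..b, |deriv w x| := intervalIntegral.integral_const_mul _ _
    _ = 4 * V / s := by rw [← hV]; ring
end
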